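/- Let G_1, …, G_N be finite simple graphs on Fin n (n ≥ 1) and let P be an irreducible row-stochastic N×N matrix. Then the matrix 𝒟 := (Pᵀ ⊗ I_{n²})·blockdiag(J(G_1) ⊗ J(G_1), …, J(G_N) ⊗ J(G_N)) ∈ ℝ^{Nn²×Nn²} satisfies ρ(𝒟) < 1. -/

import Mathlib

open Matrix Kronecker
open scoped ENNReal

/-- `J(G)` : the matrix with entries `A(G)_{ij} / (d_G(i) + 1)`. -/
noncomputable def Jmat {n : ℕ} (G : SimpleGraph (Fin n)) [DecidableRel G.Adj] :
    Matrix (Fin n) (Fin n) ℝ :=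
  Matrix.of fun i j => (if G.Adj i j then 1 else 0) / ((G.degree i : ℝ) + 1)

/-- Spectral radius of a real square matrix: max modulus of its complex eigenvalues. -/
noncomputable def specRad {m : Type*} [Fintype m] [DecidableEq m] (M : Matrix m m ℝ) : ℝ≥0∞ :=
  spectralRadius ℂ (M.map (algebraMap ℝ ℂ))

/-- Block-diagonal matrix with blocks `Js 1, …, Js N`, with rows/columns indexed by
pairs `(i, u)`, `(i, u)` being coordinate `u` of block `i`. -/
def blkDiag {N : ℕ} {m : Type*} [DecidableEq m] (Js : Fin N → Matrix m m ℝ) :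
    Matrix (Fin N × m) (Fin N × m) ℝ :=
  (Matrix.blockDiagonal Js).submatrix Prod.swap Prod.swap

lemma Jmat_nonneg {n : ℕ} (G : SimpleGraph (Fin n)) [DecidableRel G.Adj] (i j : Fin n) :
    0 ≤ Jmat G i j := by
  unfold Jmat
  simp only [Matrix.of_apply]
  positivity

lemma Jmat_rowsum {n : ℕ} (hn : 1 ≤ n) (G : SimpleGraph (Fin n)) [DecidableRel G.Adj]
    (i : Fin n) : ∑ j, Jmat G i j ≤ 1 - 1/(n:ℝ) := by
  have hdeg : (G.degree i : ℝ) + 1 ≤ (n : ℝ) := by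
    have := G.degree_lt_card_verts i
    rw [Fintype.card_fin] at this
    have : G.degree i + 1 ≤ n := this
    exact_mod_cast this
  have hpos : (0:ℝ) < (G.degree i : ℝ) + 1 := by positivity
  have hsum : ∑ j, Jmat G i j = (G.degree i : ℝ) / ((G.degree i : ℝ) + 1) := by
    unfold Jmat
    simp only [Matrix.of_apply]
    rw [← Finset.sum_div]
    congr 1
    rw [Finset.sum_boole]
    congr 1
    rw [SimpleGraph.degree, SimpleGraph.neighborFinset_eq_filter]
  rw [hsum]
  have hn0 : (0:ℝ) < (n:ℝ) := by positivity
  rw [div_le_iff₀ hpos]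
  have h1 : 1 - 1/(n:ℝ) = ((n:ℝ)-1)/n := by field_simp
  rw [h1, div_mul_eq_mul_div, le_div_iff₀ hn0]
  nlinarith [hdeg]

lemma D_apply {N : ℕ} {m : Type*} [Fintype m] [DecidableEq m]
    (P : Matrix (Fin N) (Fin N) ℝ) (Js : Fin N → Matrix m m ℝ)
    (i j : Fin N) (u v : m) :
    ((P.transpose ⊗ₖ (1 : Matrix m m ℝ)) * blkDiag Js) (i, u) (j, v)
      = P j i * Js j u v := by
  rw [Matrix.mul_apply, Fintype.sum_prod_type]
  simp [blkDiag, Matrix.blockDiagonal_apply, Matrix.one_apply, Finset.sum_ite_eq,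
    mul_ite, ite_mul, Matrix.submatrix_apply, mul_comm]

/-- eigenvalue modulus bound from row sums of powers. -/
lemma eig_pow_bound {ι : Type*} [Fintype ι] [DecidableEq ι] (D : Matrix ι ι ℝ)
    (lam : ℂ) (hlam : lam ∈ spectrum ℂ (D.map (algebraMap ℝ ℂ)))
    (hDknn : ∀ k, ∀ a b, 0 ≤ (D ^ k) a b)
    (t : ℕ → ℝ)
    (hRow : ∀ k (a : ι), ∑ b, (D ^ k) a b ≤ t k) :
    ∀ k, ‖lam‖ ^ k ≤ t k := by
  classical
  set M' := D.map (algebraMap ℝ ℂ) with hM'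
  have hmem := spectrum.mem_iff.mp hlam
  have hdet : (algebraMap ℂ (Matrix ι ι ℂ) lam - M').det = 0 := by
    by_contra h
    exact hmem ((Matrix.isUnit_iff_isUnit_det _).mpr (isUnit_iff_ne_zero.mpr h))
  obtain ⟨x, hx0, hxe⟩ := Matrix.exists_mulVec_eq_zero_iff.mpr hdet
  have heig : M' *ᵥ x = lam • x := by
    rw [Matrix.sub_mulVec] at hxe
    have h1 : algebraMap ℂ (Matrix ι ι ℂ) lam *ᵥ x = lam • x := by
      rw [Algebra.algebraMap_eq_smul_one, Matrix.smul_mulVec, Matrix.one_mulVec]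
    rw [h1] at hxe
    linear_combination (norm := module) -hxe
  have heigk : ∀ k, (M' ^ k) *ᵥ x = (lam ^ k) • x := by
    intro k
    induction k with
    | zero => simp [Matrix.one_mulVec]
    | succ k ih =>
      rw [pow_succ, ← Matrix.mulVec_mulVec, heig, Matrix.mulVec_smul, ih, pow_succ]
      rw [smul_smul, ← pow_succ']
      rw [pow_succ]
  have hmap : ∀ k, (M' ^ k) = (D ^ k).map (algebraMap ℝ ℂ) := by
    intro k
    rw [hM']
    have := map_pow ((algebraMap ℝ ℂ).mapMatrix (m := ι)) D k
    simpa [RingHom.mapMatrix_apply] using this.symm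
  obtain ⟨b0, hb0⟩ := Function.ne_iff.mp hx0
  obtain ⟨a, -, ha⟩ := Finset.exists_max_image Finset.univ (fun b => ‖x b‖)
    ⟨b0, Finset.mem_univ b0⟩
  have hxa : 0 < ‖x a‖ :=
    lt_of_lt_of_le (norm_pos_iff.mpr hb0) (ha b0 (Finset.mem_univ b0))
  intro k
  have hstep : ‖lam‖ ^ k * ‖x a‖ ≤ t k * ‖x a‖ := by
    have h2 : ‖lam‖ ^ k * ‖x a‖ = ‖((M' ^ k) *ᵥ x) a‖ := by
      rw [heigk k]
      simp [norm_smul]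
    rw [h2, Matrix.mulVec, dotProduct]
    calc ‖∑ b, (M' ^ k) a b * x b‖ ≤ ∑ b, ‖(M' ^ k) a b * x b‖ := norm_sum_le _ _
      _ ≤ ∑ b, (D ^ k) a b * ‖x a‖ := by
          apply Finset.sum_le_sum
          intro b _
          rw [norm_mul, hmap k]
          have h3 : ‖((D ^ k).map (algebraMap ℝ ℂ)) a b‖ = (D ^ k) a b := by
            simp only [Matrix.map_apply]
            rw [show (algebraMap ℝ ℂ) ((D^k) a b) = (((D^k) a b : ℝ) : ℂ) from rfl]
            rw [Complex.norm_real, Real.norm_eq_abs, abs_of_nonneg (hDknn k a b)]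
          rw [h3]
          exact mul_le_mul_of_nonneg_left (ha b (Finset.mem_univ b)) (hDknn k a b)
      _ = (∑ b, (D ^ k) a b) * ‖x a‖ := by rw [Finset.sum_mul]
      _ ≤ t k * ‖x a‖ := mul_le_mul_of_nonneg_right (hRow k a) (norm_nonneg _)
  exact le_of_mul_le_mul_right hstep hxa

/-- For graphs `G_1, …, G_N` on `Fin n` (`n ≥ 1`) and an irreducible row-stochastic `P`,
the matrix `𝒟 = (Pᵀ ⊗ I_{n²}) · blockdiag(J(G_1) ⊗ J(G_1), …, J(G_N) ⊗ J(G_N))`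
satisfies `ρ(𝒟) < 1`. -/
theorem specRad_Dmat_lt_one {N n : ℕ} (hn : 1 ≤ n)
    (Gs : Fin N → SimpleGraph (Fin n)) [∀ i, DecidableRel (Gs i).Adj]
    (P : Matrix (Fin N) (Fin N) ℝ)
    (hPnonneg : ∀ i j, 0 ≤ P i j) (hProw : ∀ i, ∑ j, P i j = 1)
    (hPirr : ∀ i j, ∃ r, 1 ≤ r ∧ 0 < (P ^ r) i j) :
    specRad ((P.transpose ⊗ₖ (1 : Matrix (Fin n × Fin n) (Fin n × Fin n) ℝ)) *
      blkDiag (fun i => Jmat (Gs i) ⊗ₖ Jmat (Gs i))) < 1 := by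
  classical
  set Js : Fin N → Matrix (Fin n × Fin n) (Fin n × Fin n) ℝ :=
    fun i => Jmat (Gs i) ⊗ₖ Jmat (Gs i) with hJs
  set D : Matrix (Fin N × (Fin n × Fin n)) (Fin N × (Fin n × Fin n)) ℝ :=
    (P.transpose ⊗ₖ (1 : Matrix (Fin n × Fin n) (Fin n × Fin n) ℝ)) * blkDiag Js with hD
  -- N = 0 : trivial, the algebra is trivial and the spectrum is empty
  rcases Nat.eq_zero_or_pos N with hN0 | hNpos
  · subst hN0
    haveI : Subsingleton (Matrix (Fin 0 × (Fin n × Fin n)) (Fin 0 × (Fin n × Fin n)) ℂ) :=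
      ⟨fun a b => by ext i j; exact i.1.elim0⟩
    have hempty : spectrum ℂ (D.map (algebraMap ℝ ℂ)) = ∅ := by
      rw [Set.eq_empty_iff_forall_notMem]
      intro lam hlam
      exact (spectrum.mem_iff.mp hlam) (isUnit_of_subsingleton _)
    show specRad D < 1
    unfold specRad spectralRadius
    rw [hempty]
    simp
  -- main case
  set c₀ : ℝ := 1 - 1/(n:ℝ) with hc₀
  have hn0 : (0:ℝ) < (n:ℝ) := by positivity
  have hc₀0 : 0 ≤ c₀ := by
    rw [hc₀]
    have : 1/(n:ℝ) ≤ 1 := by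
      rw [div_le_one hn0]; exact_mod_cast hn
    linarith
  have hc₀1 : c₀ < 1 := by
    rw [hc₀]
    have : 0 < 1/(n:ℝ) := by positivity
    linarith
  set c : ℝ := c₀ ^ 2 with hc
  have hc0 : 0 ≤ c := by positivity
  have hc1 : c < 1 := by rw [hc]; nlinarith
  have hJsnn : ∀ j u v, 0 ≤ Js j u v := by
    intro j u v
    exact mul_nonneg (Jmat_nonneg _ _ _) (Jmat_nonneg _ _ _)
  have hJsrow : ∀ j u, ∑ v, Js j u v ≤ c := by
    intro j u
    have : ∑ v : Fin n × Fin n, Js j u v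
        = (∑ v₁, Jmat (Gs j) u.1 v₁) * (∑ v₂, Jmat (Gs j) u.2 v₂) := by
      rw [Fintype.sum_prod_type, Finset.sum_mul_sum]
      rfl
    rw [this, hc, sq]
    exact mul_le_mul (Jmat_rowsum hn _ _) (Jmat_rowsum hn _ _)
      (Finset.sum_nonneg fun _ _ => Jmat_nonneg _ _ _) hc₀0
  have hDnn : ∀ a b, 0 ≤ D a b := by
    intro a b
    rw [hD, show a = (a.1, a.2) from rfl, show b = (b.1, b.2) from rfl, D_apply]
    exact mul_nonneg (hPnonneg _ _) (hJsnn _ _ _)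
  have hDknn : ∀ k, ∀ a b, 0 ≤ (D ^ k) a b := by
    intro k
    induction k with
    | zero => intro a b; rw [pow_zero, Matrix.one_apply]; positivity
    | succ k ih =>
      intro a b
      rw [pow_succ, Matrix.mul_apply]
      exact Finset.sum_nonneg fun w _ => mul_nonneg (ih a w) (hDnn w b)
  have hPknn : ∀ k, ∀ i j, 0 ≤ (P ^ k) i j := by
    intro k
    induction k with
    | zero => intro i j; rw [pow_zero, Matrix.one_apply]; positivity
    | succ k ih =>
      intro i j
      rw [pow_succ, Matrix.mul_apply]
      exact Finset.sum_nonneg fun w _ => mul_nonneg (ih i w) (hPnonneg w j)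
  have hPkrow : ∀ k, ∀ i, ∑ j, (P ^ k) i j = 1 := by
    intro k
    induction k with
    | zero => intro i; simp [Matrix.one_apply]
    | succ k ih =>
      intro i
      rw [pow_succ]
      simp only [Matrix.mul_apply]
      rw [Finset.sum_comm]
      calc ∑ l, ∑ j, (P ^ k) i l * P l j
          = ∑ l, (P ^ k) i l * ∑ j, P l j := by simp [Finset.mul_sum]
        _ = 1 := by simp only [hProw, mul_one]; exact ih i
  have hPkcol : ∀ k, ∀ i, ∑ j, (P ^ k) j i ≤ (N : ℝ) := by
    intro k i
    calc ∑ j, (P ^ k) j i ≤ ∑ _j : Fin N, (1:ℝ) := by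
          apply Finset.sum_le_sum
          intro j _
          calc (P ^ k) j i ≤ ∑ i', (P ^ k) j i' :=
                Finset.single_le_sum (fun i' _ => hPknn k j i') (Finset.mem_univ i)
            _ = 1 := hPkrow k j
      _ = (N : ℝ) := by simp
  -- key row-sum bound for powers of D
  have hKey : ∀ k, ∀ a : Fin N × (Fin n × Fin n),
      ∑ b, (D ^ k) a b ≤ c ^ k * ∑ j, (P ^ k) j a.1 := by
    intro k
    induction k with
    | zero =>
      intro a
      simp [Matrix.one_apply]
    | succ k ih =>
      intro a
      rw [pow_succ']
      calc ∑ b, (D * D ^ k) a b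
          = ∑ w, D a w * ∑ b, (D ^ k) w b := by
            simp only [Matrix.mul_apply]
            rw [Finset.sum_comm]
            simp [Finset.mul_sum]
        _ ≤ ∑ w, D a w * (c ^ k * ∑ j, (P ^ k) j w.1) := by
            apply Finset.sum_le_sum
            intro w _
            exact mul_le_mul_of_nonneg_left (ih w) (hDnn a w)
        _ = ∑ l, (∑ u, D a (l, u)) * (c ^ k * ∑ j, (P ^ k) j l) := by
            rw [Fintype.sum_prod_type]
            exact Finset.sum_congr rfl fun l _ => by rw [Finset.sum_mul]
        _ ≤ ∑ l, (P l a.1 * c) * (c ^ k * ∑ j, (P ^ k) j l) := by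
            apply Finset.sum_le_sum
            intro l _
            apply mul_le_mul_of_nonneg_right
            · have h4 : ∑ u, D a (l, u) = P l a.1 * ∑ u, Js l a.2 u := by
                rw [Finset.mul_sum]
                exact Finset.sum_congr rfl fun u _ => by
                  rw [hD, show a = (a.1, a.2) from rfl, D_apply]
              rw [h4]
              exact mul_le_mul_of_nonneg_left (hJsrow l a.2) (hPnonneg _ _)
            · exact mul_nonneg (by positivity)
                (Finset.sum_nonneg fun j _ => hPknn k j l)
        _ = c ^ (k+1) * ∑ l, (∑ j, (P ^ k) j l) * P l a.1 := by
            rw [Finset.mul_sum]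
            exact Finset.sum_congr rfl fun l _ => by ring
        _ = c ^ (k+1) * ∑ j, (P ^ (k+1)) j a.1 := by
            congr 1
            rw [pow_succ]
            simp only [Matrix.mul_apply]
            rw [Finset.sum_comm]
            exact Finset.sum_congr rfl fun l _ => by rw [Finset.sum_mul]
  have hRow : ∀ k (a : Fin N × (Fin n × Fin n)), ∑ b, (D ^ k) a b ≤ (N : ℝ) * c ^ k := by
    intro k a
    calc ∑ b, (D ^ k) a b ≤ c ^ k * ∑ j, (P ^ k) j a.1 := hKey k a
      _ ≤ c ^ k * (N : ℝ) := mul_le_mul_of_nonneg_left (hPkcol k a.1) (by positivity)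
      _ = (N : ℝ) * c ^ k := mul_comm _ _
  -- choose k₀ such that N * c ^ k₀ < 1
  have hNr : (0:ℝ) < 1 / (N : ℝ) := by
    have : (0:ℝ) < (N:ℝ) := by exact_mod_cast hNpos
    positivity
  obtain ⟨k₀, hk₀⟩ := exists_pow_lt_of_lt_one hNr hc1
  set t : ℝ := (N : ℝ) * c ^ k₀ with ht
  have hNpos' : (0:ℝ) < (N:ℝ) := by exact_mod_cast hNpos
  have ht1 : t < 1 := by
    rw [ht]
    calc (N:ℝ) * c ^ k₀ < (N:ℝ) * (1/(N:ℝ)) := by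
          exact mul_lt_mul_of_pos_left hk₀ hNpos'
      _ = 1 := by field_simp
  have ht0 : 0 ≤ t := by
    rw [ht]; positivity
  have hk₀pos : 0 < k₀ := by
    rcases Nat.eq_zero_or_pos k₀ with h | h
    · exfalso
      rw [h, pow_zero] at hk₀
      have : 1/(N:ℝ) ≤ 1 := by
        rw [div_le_one hNpos']; exact_mod_cast hNpos
      linarith
    · exact h
  set r : ℝ := t ^ ((k₀ : ℝ)⁻¹) with hr
  have hr1 : r < 1 := by
    rcases eq_or_lt_of_le ht0 with h | h
    · rw [hr, ← h]
      rw [Real.zero_rpow (by positivity : ((k₀:ℝ)⁻¹) ≠ 0)]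
      norm_num
    · exact Real.rpow_lt_one ht0 ht1 (by positivity)
  have hr0 : 0 ≤ r := Real.rpow_nonneg ht0 _
  -- every spectral value has norm ≤ r
  have hbound : ∀ lam ∈ spectrum ℂ (D.map (algebraMap ℝ ℂ)), ‖lam‖ ≤ r := by
    intro lam hlam
    have h1 : ‖lam‖ ^ k₀ ≤ t := by
      have := eig_pow_bound D lam hlam hDknn (fun k => (N:ℝ) * c ^ k) hRow k₀
      exact this
    have h2 : ‖lam‖ = (‖lam‖ ^ k₀) ^ ((k₀:ℝ)⁻¹) := by
      rw [← Real.rpow_natCast ‖lam‖ k₀, ← Real.rpow_mul (norm_nonneg _),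
        mul_inv_cancel₀ (by positivity : ((k₀:ℕ):ℝ) ≠ 0), Real.rpow_one]
    rw [h2, hr]
    exact Real.rpow_le_rpow (by positivity) h1 (by positivity)
  show specRad D < 1
  have hle : specRad D ≤ ENNReal.ofReal r := by
    unfold specRad spectralRadius
    apply iSup₂_le
    intro lam hlam
    rw [show ((‖lam‖₊ : NNReal) : ℝ≥0∞) = ENNReal.ofReal ‖lam‖ from (ofReal_norm lam).symm]
    exact ENNReal.ofReal_le_ofReal (hbound lam hlam)
  exact lt_of_le_of_lt hle (ENNReal.ofReal_lt_one.mpr hr1)
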